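/- Let F be a field of characteristic different from 2 and n, m ≥ 1. Let osp(n,m) denote the subspace of M_{n+2m}(F) consisting of block matrices [[A, B], [C, D]] where A ∈ M_n(F) with Aᵀ = A, B ∈ M_{n,2m}(F), C = Q⁻¹Bᵀ, and D ∈ M_{2m}(F) with D = Q⁻¹DᵀQ, where Q = [[0, E_m], [−E_m, 0]] (E_m the m×m identity). Grade osp(n,m) with even part the block-diagonal matrices (B = 0, C = 0) and odd part the block-off-diagonal matrices (A = 0, D = 0), and equip it with the super-symmetrized product: for x = x₀ + x₁ and y = y₀ + y₁ decomposed into even and odd parts, x∘y is bilinear with x₀∘y₀ = (1/2)(x₀y₀ + y₀x₀), x₀∘y₁ = (1/2)(x₀y₁ + y₁x₀), x₁∘y₀ = (1/2)(x₁y₀ + y₀x₁), and x₁∘y₁ = (1/2)(x₁y₁ − y₁x₁). Then every 1/2-derivation φ of osp(n,m) is of the form φ(x) = α·x for some α ∈ F. -/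

import Mathlib

/-!
Putting `y = 1` in the Leibniz rule gives `φ x = x ∘ c` with `c = φ 1`. The idempotent
`e = diag(Eₙ, 0)` satisfies `e ∘ e = e`, and the rule at `(e, e)` gives `e ∘ c = e ∘ (e ∘ c)`;
since `e ∘ _` halves odd blocks, the odd part of `c` vanishes and `c = diag(A, D)`.
For odd `x` with upper right block `X` one has `x ∘ e = x / 2`, and the rule at `(x, e)` yields
`X D = A X` for every `X`. Testing this on matrix units shows `A` and `D` are the same scalar `α`,
so `c = α • 1` and `φ x = x ∘ (α • 1) = α • x`.
-/

/-- The even (block-diagonal) part of a matrix indexed by `α ⊕ β`. -/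
def blockDiagPart {F : Type*} [Field F] {α β : Type*}
    (x : Matrix (α ⊕ β) (α ⊕ β) F) : Matrix (α ⊕ β) (α ⊕ β) F :=
  Matrix.of fun i j => if i.isLeft = j.isLeft then x i j else 0

/-- The super-symmetrized product `∘` on block matrices: writing
`x = x₀ + x₁` with `x₀` the block-diagonal (even) part and `x₁` the
block-off-diagonal (odd) part, `x ∘ y` is bilinear with
`x₀∘y₀ = (1/2)(x₀y₀ + y₀x₀)`, `x₀∘y₁ = (1/2)(x₀y₁ + y₁x₀)`,
`x₁∘y₀ = (1/2)(x₁y₀ + y₀x₁)` and `x₁∘y₁ = (1/2)(x₁y₁ − y₁x₁)`. -/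
def superMul {F : Type*} [Field F] {α β : Type*} [Fintype α] [Fintype β]
    (x y : Matrix (α ⊕ β) (α ⊕ β) F) : Matrix (α ⊕ β) (α ⊕ β) F :=
  (1 / 2 : F) •
    (blockDiagPart x * blockDiagPart y + blockDiagPart y * blockDiagPart x
      + blockDiagPart x * (y - blockDiagPart y) + (y - blockDiagPart y) * blockDiagPart x
      + (x - blockDiagPart x) * blockDiagPart y + blockDiagPart y * (x - blockDiagPart x)
      + (x - blockDiagPart x) * (y - blockDiagPart y)
      - (y - blockDiagPart y) * (x - blockDiagPart x))

/-- The matrix `Q = [[0, Eₘ], [−Eₘ, 0]] ∈ M_{2m}(F)`. -/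
def ospQmat (F : Type*) [Field F] (m : ℕ) :
    Matrix (Fin m ⊕ Fin m) (Fin m ⊕ Fin m) F :=
  Matrix.fromBlocks 0 1 (-1) 0

/-- The subspace `osp(n,m)` of `M_{n+2m}(F)`: block matrices
`[[A, B], [C, D]]` with `Aᵀ = A`, `C = Q⁻¹Bᵀ` and `D = Q⁻¹DᵀQ`. -/
def ospSub (F : Type*) [Field F] (n m : ℕ) :
    Submodule F (Matrix (Fin n ⊕ (Fin m ⊕ Fin m)) (Fin n ⊕ (Fin m ⊕ Fin m)) F) where
  carrier := {x | x.toBlocks₁₁.transpose = x.toBlocks₁₁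
    ∧ x.toBlocks₂₁ = (ospQmat F m)⁻¹ * x.toBlocks₁₂.transpose
    ∧ x.toBlocks₂₂ = (ospQmat F m)⁻¹ * x.toBlocks₂₂.transpose * ospQmat F m}
  add_mem' := by
    rintro a b ⟨ha1, ha2, ha3⟩ ⟨hb1, hb2, hb3⟩
    refine ⟨?_, ?_, ?_⟩
    · show (a.toBlocks₁₁ + b.toBlocks₁₁).transpose = a.toBlocks₁₁ + b.toBlocks₁₁
      rw [Matrix.transpose_add, ha1, hb1]
    · show a.toBlocks₂₁ + b.toBlocks₂₁
        = (ospQmat F m)⁻¹ * (a.toBlocks₁₂ + b.toBlocks₁₂).transpose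
      rw [Matrix.transpose_add, Matrix.mul_add, ← ha2, ← hb2]
    · show a.toBlocks₂₂ + b.toBlocks₂₂
        = (ospQmat F m)⁻¹ * (a.toBlocks₂₂ + b.toBlocks₂₂).transpose * ospQmat F m
      rw [Matrix.transpose_add, Matrix.mul_add, Matrix.add_mul, ← ha3, ← hb3]
  zero_mem' := by
    refine ⟨?_, ?_, ?_⟩
    · show (0 : Matrix (Fin n) (Fin n) F).transpose = 0
      simp
    · show (0 : Matrix (Fin m ⊕ Fin m) (Fin n) F)
        = (ospQmat F m)⁻¹ * (0 : Matrix (Fin n) (Fin m ⊕ Fin m) F).transpose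
      simp
    · show (0 : Matrix (Fin m ⊕ Fin m) (Fin m ⊕ Fin m) F)
        = (ospQmat F m)⁻¹ * (0 : Matrix (Fin m ⊕ Fin m) (Fin m ⊕ Fin m) F).transpose * ospQmat F m
      simp
  smul_mem' := by
    rintro c x ⟨h1, h2, h3⟩
    refine ⟨?_, ?_, ?_⟩
    · show (c • x.toBlocks₁₁).transpose = c • x.toBlocks₁₁
      rw [Matrix.transpose_smul, h1]
    · show c • x.toBlocks₂₁ = (ospQmat F m)⁻¹ * (c • x.toBlocks₁₂).transpose
      rw [Matrix.transpose_smul, Matrix.mul_smul, ← h2]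
    · show c • x.toBlocks₂₂ = (ospQmat F m)⁻¹ * (c • x.toBlocks₂₂).transpose * ospQmat F m
      rw [Matrix.transpose_smul, Matrix.mul_smul, Matrix.smul_mul, ← h3]

open Matrix

section SuperMul

variable {F : Type*} [Field F] {α β : Type*}

theorem blockDiagPart_fromBlocks (A : Matrix α α F) (B : Matrix α β F) (C : Matrix β α F)
    (D : Matrix β β F) : blockDiagPart (fromBlocks A B C D) = fromBlocks A 0 0 D := by
  ext (i | i) (j | j) <;> simp [blockDiagPart]

theorem fromBlocks_sub_blockDiagPart (A : Matrix α α F) (B : Matrix α β F) (C : Matrix β α F)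
    (D : Matrix β β F) :
    fromBlocks A B C D - blockDiagPart (fromBlocks A B C D) = fromBlocks 0 B C 0 := by
  ext (i | i) (j | j) <;> simp [blockDiagPart]

theorem inv_two_smul_add_self {M : Type*} [AddCommGroup M] [Module F M] (h2 : (2 : F) ≠ 0)
    (v : M) : (2 : F)⁻¹ • (v + v) = v := by
  rw [← two_smul F v, smul_smul, inv_mul_cancel₀ h2, one_smul]

variable [Fintype α] [Fintype β]

theorem superMul_fromBlocks (A A' : Matrix α α F) (B B' : Matrix α β F) (C C' : Matrix β α F)
    (D D' : Matrix β β F) :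
    superMul (fromBlocks A B C D) (fromBlocks A' B' C' D') = (2 : F)⁻¹ •
      fromBlocks (A * A' + A' * A + B * C' - B' * C) (A * B' + B' * D + B * D' + A' * B)
        (D * C' + C' * A + C * A' + D' * C) (D * D' + D' * D + C * B' - C' * B) := by
  rw [superMul, fromBlocks_sub_blockDiagPart, fromBlocks_sub_blockDiagPart,
    blockDiagPart_fromBlocks, blockDiagPart_fromBlocks, one_div]
  simp only [fromBlocks_multiply, fromBlocks_add, sub_eq_add_neg, fromBlocks_neg]
  congr 2 <;> simp

theorem superMul_comm_fromBlocks_diag (x : Matrix (α ⊕ β) (α ⊕ β) F) (A : Matrix α α F)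
    (D : Matrix β β F) : superMul x (fromBlocks A 0 0 D) = superMul (fromBlocks A 0 0 D) x := by
  rw [← fromBlocks_toBlocks x, superMul_fromBlocks, superMul_fromBlocks]
  congr 2 <;> simp <;> abel

variable [DecidableEq α] [DecidableEq β]

theorem superMul_smul_one (h2 : (2 : F) ≠ 0) (x : Matrix (α ⊕ β) (α ⊕ β) F) (a : F) :
    superMul x (a • 1) = a • x := by
  conv_rhs => rw [← fromBlocks_toBlocks x]
  rw [← fromBlocks_toBlocks x, ← fromBlocks_one, fromBlocks_smul, superMul_fromBlocks]
  simp [fromBlocks_smul, inv_two_smul_add_self h2]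

theorem superMul_one (h2 : (2 : F) ≠ 0) (x : Matrix (α ⊕ β) (α ⊕ β) F) : superMul x 1 = x := by
  simpa using superMul_smul_one h2 x 1

theorem superMul_fromBlocks_one_zero (h2 : (2 : F) ≠ 0) (A : Matrix α α F) (B : Matrix α β F)
    (C : Matrix β α F) (D : Matrix β β F) :
    superMul (fromBlocks 1 0 0 0) (fromBlocks A B C D)
      = fromBlocks A ((2 : F)⁻¹ • B) ((2 : F)⁻¹ • C) 0 := by
  rw [superMul_fromBlocks]
  simp [fromBlocks_smul, inv_two_smul_add_self h2]

end SuperMul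

section Osp

variable {F : Type*} [Field F] {n m : ℕ}

theorem ospQmat_mul_self : ospQmat F m * ospQmat F m = -1 := by
  rw [ospQmat, fromBlocks_multiply, ← fromBlocks_one, fromBlocks_neg]
  simp

theorem inv_ospQmat_mul : (ospQmat F m)⁻¹ * ospQmat F m = 1 := by
  rw [inv_eq_left_inv (B := -ospQmat F m) (by rw [neg_mul, ospQmat_mul_self, neg_neg]), neg_mul,
    ospQmat_mul_self, neg_neg]

namespace ospSub

theorem fromBlocks_mem {A : Matrix (Fin n) (Fin n) F} (B : Matrix (Fin n) (Fin m ⊕ Fin m) F)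
    {D : Matrix (Fin m ⊕ Fin m) (Fin m ⊕ Fin m) F} (hA : Aᵀ = A)
    (hD : D = (ospQmat F m)⁻¹ * Dᵀ * ospQmat F m) :
    fromBlocks A B ((ospQmat F m)⁻¹ * Bᵀ) D ∈ ospSub F n m :=
  ⟨hA, rfl, hD⟩

theorem one_mem :
    (1 : Matrix (Fin n ⊕ (Fin m ⊕ Fin m)) (Fin n ⊕ (Fin m ⊕ Fin m)) F) ∈ ospSub F n m := by
  simpa [fromBlocks_one] using
    fromBlocks_mem (F := F) (A := 1) 0 (D := 1) (by simp) (by simp [inv_ospQmat_mul])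

theorem fromBlocks_one_zero_mem : fromBlocks 1 0 0 0 ∈ ospSub F n m := by
  simpa using fromBlocks_mem (F := F) (n := n) (m := m) (A := 1) 0 (D := 0) (by simp) (by simp)

theorem fromBlocks_offDiag_mem (B : Matrix (Fin n) (Fin m ⊕ Fin m) F) :
    fromBlocks 0 B ((ospQmat F m)⁻¹ * Bᵀ) 0 ∈ ospSub F n m :=
  fromBlocks_mem B (by simp) (by simp)

end ospSub

end Osp

theorem Matrix.exists_eq_smul_one_of_forall_mul_eq_mul {R ι κ : Type*} [Semiring R]
    [Fintype ι] [Fintype κ] [DecidableEq ι] [DecidableEq κ] [Nonempty ι] [Nonempty κ]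
    {A : Matrix ι ι R} {D : Matrix κ κ R} (h : ∀ X : Matrix ι κ R, X * D = A * X) :
    ∃ a : R, A = a • 1 ∧ D = a • 1 := by
  obtain ⟨p₀⟩ := ‹Nonempty ι›
  obtain ⟨q₀⟩ := ‹Nonempty κ›
  have entry (i p : ι) (q k : κ) : (if p = i then D q k else 0) = if q = k then A i p else 0 := by
    simpa [mul_apply, single, ite_and] using congrFun₂ (h (single p q 1)) i k
  have hD : D = A p₀ p₀ • 1 := by
    ext q k
    simpa [one_apply] using entry p₀ p₀ q k
  refine ⟨A p₀ p₀, ?_, hD⟩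
  ext i p
  by_cases hip : i = p
  · subst hip
    simpa [hD] using (entry i i q₀ q₀).symm
  · simpa [hip, Ne.symm hip] using (entry i p q₀ q₀).symm

section HalfDerivation

variable {F : Type*} [Field F] {α β : Type*} [Fintype α] [Fintype β]

theorem eq_of_eq_inv_two_smul_add {M : Type*} [AddCommGroup M] [Module F M] (h2 : (2 : F) ≠ 0)
    {v w : M} (h : v = (2 : F)⁻¹ • (v + w)) : v = w := by
  have h' : (2 : F) • v = v + w := by
    conv_lhs => rw [h]
    rw [smul_smul, mul_inv_cancel₀ h2, one_smul]
  rwa [two_smul, add_right_inj] at h'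

theorem eq_zero_of_eq_inv_two_smul {M : Type*} [AddCommGroup M] [Module F M] (h2 : (2 : F) ≠ 0)
    {v : M} (h : v = (2 : F)⁻¹ • v) : v = 0 :=
  eq_of_eq_inv_two_smul_add h2 (by rwa [add_zero])

/-- `S` need not be closed under `superMul`, so the Leibniz rule is imposed whenever `x ∘ y`
lies in `S`. -/
def IsHalfDerivation {S : Submodule F (Matrix (α ⊕ β) (α ⊕ β) F)} (φ : S →ₗ[F] S) : Prop :=
  ∀ x y z : S, (z : Matrix (α ⊕ β) (α ⊕ β) F) = superMul x y →
    (φ z : Matrix (α ⊕ β) (α ⊕ β) F) = (1 / 2 : F) • (superMul (φ x) y + superMul x (φ y))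

namespace IsHalfDerivation

variable {S : Submodule F (Matrix (α ⊕ β) (α ⊕ β) F)} {φ : S →ₗ[F] S}
  [DecidableEq α] [DecidableEq β]

theorem map_eq_superMul_map_one (hφ : IsHalfDerivation φ) (h2 : (2 : F) ≠ 0)
    (h1 : (1 : Matrix (α ⊕ β) (α ⊕ β) F) ∈ S) (x : S) :
    (φ x : Matrix (α ⊕ β) (α ⊕ β) F) = superMul x (φ ⟨1, h1⟩) := by
  have h := hφ x ⟨1, h1⟩ x (superMul_one h2 (x : Matrix (α ⊕ β) (α ⊕ β) F)).symm
  rw [superMul_one h2, one_div] at h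
  exact eq_of_eq_inv_two_smul_add h2 h

theorem exists_map_one_eq_fromBlocks (hφ : IsHalfDerivation φ) (h2 : (2 : F) ≠ 0)
    (h1 : (1 : Matrix (α ⊕ β) (α ⊕ β) F) ∈ S) (he : fromBlocks 1 0 0 0 ∈ S) :
    ∃ A D, (φ ⟨1, h1⟩ : Matrix (α ⊕ β) (α ⊕ β) F) = fromBlocks A 0 0 D := by
  set e : S := ⟨fromBlocks 1 0 0 0, he⟩
  have hee : (e : Matrix (α ⊕ β) (α ⊕ β) F) = superMul e e := by
    simp [e, superMul_fromBlocks_one_zero h2]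
  have hφe : (φ e : Matrix (α ⊕ β) (α ⊕ β) F) = superMul e (φ e) := by
    have h := hφ e e e hee
    rwa [superMul_comm_fromBlocks_diag, one_div, inv_two_smul_add_self h2] at h
  rw [map_eq_superMul_map_one hφ h2 h1,
    ← fromBlocks_toBlocks (φ ⟨1, h1⟩ : Matrix (α ⊕ β) (α ⊕ β) F),
    superMul_fromBlocks_one_zero h2, superMul_fromBlocks_one_zero h2, fromBlocks_inj] at hφe
  set c := (φ ⟨1, h1⟩ : Matrix (α ⊕ β) (α ⊕ β) F)
  have hB := eq_zero_of_eq_inv_two_smul h2 (smul_right_injective _ (inv_ne_zero h2) hφe.2.1)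
  have hC := eq_zero_of_eq_inv_two_smul h2 (smul_right_injective _ (inv_ne_zero h2) hφe.2.2.1)
  refine ⟨c.toBlocks₁₁, c.toBlocks₂₂, ?_⟩
  conv_lhs => rw [← fromBlocks_toBlocks c, hB, hC]

theorem mul_eq_mul_of_fromBlocks_mem (hφ : IsHalfDerivation φ) (h2 : (2 : F) ≠ 0)
    (h1 : (1 : Matrix (α ⊕ β) (α ⊕ β) F) ∈ S) (he : fromBlocks 1 0 0 0 ∈ S)
    {A : Matrix α α F} {D : Matrix β β F}
    (hc : (φ ⟨1, h1⟩ : Matrix (α ⊕ β) (α ⊕ β) F) = fromBlocks A 0 0 D)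
    {X : Matrix α β F} {Y : Matrix β α F} (hx : fromBlocks 0 X Y 0 ∈ S) : X * D = A * X := by
  set e : S := ⟨fromBlocks 1 0 0 0, he⟩
  set x : S := ⟨fromBlocks 0 X Y 0, hx⟩
  have hxe : (((2 : F)⁻¹ • x : S) : Matrix (α ⊕ β) (α ⊕ β) F) = superMul x e := by
    simp [x, e, superMul_comm_fromBlocks_diag, superMul_fromBlocks_one_zero h2, fromBlocks_smul]
  have h := hφ x e _ hxe
  rw [map_smul, Submodule.coe_smul, map_eq_superMul_map_one hφ h2 h1,
    map_eq_superMul_map_one hφ h2 h1 e, hc] at h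
  simp [x, e, superMul_fromBlocks, fromBlocks_smul, fromBlocks_add, inv_two_smul_add_self h2] at h
  refine eq_of_eq_inv_two_smul_add h2 (smul_right_injective _ (inv_ne_zero h2)
    (smul_right_injective _ (inv_ne_zero h2) ?_))
  linear_combination (norm := module) h.1

theorem exists_eq_smul (hφ : IsHalfDerivation φ) (h2 : (2 : F) ≠ 0)
    (h1 : (1 : Matrix (α ⊕ β) (α ⊕ β) F) ∈ S) (he : fromBlocks 1 0 0 0 ∈ S)
    (hodd : ∀ X : Matrix α β F, ∃ Y, fromBlocks 0 X Y 0 ∈ S) [Nonempty α] [Nonempty β] :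
    ∃ a : F, ∀ x : S, φ x = a • x := by
  obtain ⟨A, D, hc⟩ := hφ.exists_map_one_eq_fromBlocks h2 h1 he
  obtain ⟨a, rfl, rfl⟩ := exists_eq_smul_one_of_forall_mul_eq_mul fun X =>
    (hodd X).elim fun _ hx => hφ.mul_eq_mul_of_fromBlocks_mem h2 h1 he hc hx
  have hscalar : fromBlocks (a • 1) 0 0 (a • 1) = a • (1 : Matrix (α ⊕ β) (α ⊕ β) F) := by
    rw [← fromBlocks_one, fromBlocks_smul, smul_zero, smul_zero]
  refine ⟨a, fun x => Subtype.ext ?_⟩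
  rw [hφ.map_eq_superMul_map_one h2 h1, hc, hscalar, superMul_smul_one h2, Submodule.coe_smul]

end IsHalfDerivation

end HalfDerivation

/-- **1/2-derivations of the Jordan superalgebra `osp(n,m)`.**
Let `F` be a field of characteristic not `2` and `n, m ≥ 1`.  Every
`1/2`-derivation `φ` of `osp(n,m)` (with the super-symmetrized product `∘`)
is of the form `φ x = α • x` for some `α ∈ F`.  (The `1/2`-derivation
property is stated via representatives: whenever `z ∈ osp(n,m)` equals
`x ∘ y` as a matrix, `φ z = (1/2) • (φ x ∘ y + x ∘ φ y)`.) -/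
theorem half_derivation_of_osp
    {F : Type*} [Field F] (hchar : (2 : F) ≠ 0) (n m : ℕ) (hn : 1 ≤ n) (hm : 1 ≤ m)
    (φ : ospSub F n m →ₗ[F] ospSub F n m)
    (hφ : ∀ x y z : ospSub F n m,
      (z : Matrix (Fin n ⊕ (Fin m ⊕ Fin m)) (Fin n ⊕ (Fin m ⊕ Fin m)) F)
          = superMul (x : Matrix (Fin n ⊕ (Fin m ⊕ Fin m)) (Fin n ⊕ (Fin m ⊕ Fin m)) F)
              (y : Matrix (Fin n ⊕ (Fin m ⊕ Fin m)) (Fin n ⊕ (Fin m ⊕ Fin m)) F) →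
      (φ z : Matrix (Fin n ⊕ (Fin m ⊕ Fin m)) (Fin n ⊕ (Fin m ⊕ Fin m)) F)
        = (1 / 2 : F) •
            (superMul (φ x : Matrix (Fin n ⊕ (Fin m ⊕ Fin m)) (Fin n ⊕ (Fin m ⊕ Fin m)) F)
                (y : Matrix (Fin n ⊕ (Fin m ⊕ Fin m)) (Fin n ⊕ (Fin m ⊕ Fin m)) F)
              + superMul (x : Matrix (Fin n ⊕ (Fin m ⊕ Fin m)) (Fin n ⊕ (Fin m ⊕ Fin m)) F)
                (φ y : Matrix (Fin n ⊕ (Fin m ⊕ Fin m)) (Fin n ⊕ (Fin m ⊕ Fin m)) F))) :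
    ∃ α : F, ∀ x : ospSub F n m, φ x = α • x := by
  have : Nonempty (Fin n) := ⟨⟨0, hn⟩⟩
  have : Nonempty (Fin m ⊕ Fin m) := ⟨.inl ⟨0, hm⟩⟩
  exact IsHalfDerivation.exists_eq_smul hφ hchar ospSub.one_mem ospSub.fromBlocks_one_zero_mem
    fun X => ⟨_, ospSub.fromBlocks_offDiag_mem X⟩
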